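/- Let e_1 < e_2 < ⋯ < e_n be real numbers, let w_1,…,w_n ∈ ℝ be arbitrary weights, set τ_k = k/n for k = 1,…,n, and define the check loss ρ_τ(u) = u·(τ − 1{u ≤ 0}). Then Σ_{k=1}^n Σ_{i=1}^n w_k · ρ_{τ_k}(e_i − e_k) = Σ_{i=1}^n a(i)·e_i, where a(i) = Σ_{k=1}^n w_k τ_k − Σ_{k=i}^n w_k. -/

import Mathlib

/-!
For a single level `τ`, the check losses of `xᵢ - y` sum to
`τ Σ xᵢ - Σ_{xᵢ ≤ y} xᵢ - (τ n - #{xᵢ ≤ y}) y`. When `y = e_k` is the `k`-th order statistic and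
`τ = k/n`, the coefficient `τ n - #{eᵢ ≤ e_k} = k - k` vanishes, so the intercept drops out and
only `τ_k Σ eᵢ - Σ_{i ≤ k} eᵢ` is left. Weighting by `w_k` and swapping the two sums gives the score
`a(i) = Σ_k w_k τ_k - Σ_{k ≥ i} w_k`.
-/

open Finset

noncomputable def checkLoss (τ u : ℝ) : ℝ := u * (τ - if u ≤ 0 then 1 else 0)

theorem sum_checkLoss_sub {ι : Type*} (s : Finset ι) (x : ι → ℝ) (y τ : ℝ) :
    ∑ i ∈ s, checkLoss τ (x i - y)
      = τ * ∑ i ∈ s, x i - ∑ i ∈ s with x i ≤ y, x i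
        - (τ * #s - #{i ∈ s | x i ≤ y}) * y := by
  have hterm : ∀ i, checkLoss τ (x i - y)
      = τ * x i - τ * y - (if x i ≤ y then x i else 0) + (if x i ≤ y then 1 else 0) * y := by
    intro i
    simp only [checkLoss, sub_nonpos]
    split_ifs <;> ring
  simp only [hterm, sum_add_distrib, sum_sub_distrib, ← mul_sum, ← sum_mul, sum_const,
    nsmul_eq_mul, ← sum_filter]
  ring

theorem sum_checkLoss_sub_orderStatistic {ι : Type*} [Fintype ι] [LinearOrder ι]
    [LocallyFiniteOrderBot ι] {e : ι → ℝ} (he : StrictMono e) (c : ι) {τ : ℝ}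
    (hτ : τ * Fintype.card ι = #(Iic c)) :
    ∑ i, checkLoss τ (e i - e c) = τ * ∑ i, e i - ∑ i ∈ Iic c, e i := by
  have hfilter : ({i | e i ≤ e c} : Finset ι) = Iic c := by
    ext i
    simp [he.le_iff_le]
  rw [sum_checkLoss_sub, hfilter, card_univ, hτ, sub_self, zero_mul, sub_zero]

theorem sum_mul_sum_Iic_eq_sum_sum_Ici_mul {ι R : Type*} [Fintype ι] [Preorder ι]
    [LocallyFiniteOrderBot ι] [LocallyFiniteOrderTop ι] [NonUnitalNonAssocSemiring R]
    (w e : ι → R) :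
    ∑ k, w k * ∑ i ∈ Iic k, e i = ∑ i, (∑ k ∈ Ici i, w k) * e i := by
  simp only [mul_sum, sum_mul]
  exact sum_comm' (by simp [and_comm])

/-- Indices are 0-based in `Fin n`, so the level `τ_k = k/n` appears as `((k : ℝ) + 1) / n`. -/
theorem wcqr_loss_eq_grr_loss {n : ℕ} (e : Fin n → ℝ) (he : StrictMono e)
    (w : Fin n → ℝ) :
    (∑ k : Fin n, ∑ i : Fin n,
        w k * ((e i - e k) *
          (((k : ℝ) + 1) / n - if e i - e k ≤ 0 then 1 else 0)))
      = ∑ i : Fin n,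
          ((∑ k : Fin n, w k * (((k : ℝ) + 1) / n)) - ∑ k ∈ Finset.Ici i, w k) * e i := by
  have hlevel : ∀ k : Fin n, ((k : ℝ) + 1) / n * Fintype.card (Fin n) = #(Iic k) := by
    intro k
    have hn : (n : ℝ) ≠ 0 := by exact_mod_cast k.pos.ne'
    rw [Fintype.card_fin, Fin.card_Iic, div_mul_cancel₀ _ hn]
    push_cast
    ring
  calc (∑ k : Fin n, ∑ i : Fin n, w k * checkLoss (((k : ℝ) + 1) / n) (e i - e k))
      = ∑ k : Fin n, w k * (((k : ℝ) + 1) / n * ∑ i, e i - ∑ i ∈ Iic k, e i) := by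
        simp only [← mul_sum, sum_checkLoss_sub_orderStatistic he _ (hlevel _)]
    _ = _ := by
        simp only [mul_sub, sum_sub_distrib, sum_mul_sum_Iic_eq_sum_sum_Ici_mul, sub_mul,
          ← mul_assoc, ← sum_mul, ← mul_sum]
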